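/- Let K be a complex Hilbert space and let (T_k)_{k ∈ ℕ} be a sequence of invertible bounded operators on K with T_0 = id_K. Let H be the ℓ²-direct sum of countably many copies of K (H = lp (fun _ : ℕ => K) 2), and for i, j ∈ ℕ let T_{ij} ∈ B(H) be the bounded operator sending (ξ_n)_{n ∈ ℕ} to the vector whose i-th entry is T_i⁻¹(T_j ξ_j) and whose other entries are 0. Let A be the norm-closed linear span of {T_{ij} : i, j ∈ ℕ} in B(H), and set q_k = T_{kk}. Then A is a norm-closed subalgebra of B(H) which is topologically simple (its only norm-closed two-sided ideals are {0} and A), and each q_k is an algebraically minimal projection of A, i.e. q_k is a self-adjoint idempotent and q_k A q_k = ℂ q_k. -/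

import Mathlib

/-!
The operators `T_{ij}` form a system of matrix units, so the compression `q_i a q_j` of any
`a` in the closed span `A` is a scalar multiple of `T_{ij}`: this holds on the span and passes to
the closure because `ℂ T_{ij}` is closed. On `ℓ²(ℕ, K)` the diagonal units `q_k` are the coordinate
projections, which sum strongly to the identity, so a nonzero `x` has some nonzero compression
`q_i x q_j = c T_{ij}`. A closed ideal containing `x` therefore contains `T_{ij}`, hence every
`T_{kl} = T_{ki} T_{ij} T_{jl}`, hence their closed span `A`.
-/

open Filter

noncomputable section

variable {K : Type*} [NormedAddCommGroup K] [InnerProductSpace ℂ K] [CompleteSpace K]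

/-- `J` is a norm-closed two-sided ideal of the algebra (set) `A`. -/
def IsClosedIdealOf {H : Type*} [NormedAddCommGroup H] [NormedSpace ℂ H]
    (A J : Set (H →L[ℂ] H)) : Prop :=
  J ⊆ A ∧ IsClosed J ∧ (0 : H →L[ℂ] H) ∈ J ∧
    (∀ x ∈ J, ∀ y ∈ J, x + y ∈ J) ∧
    (∀ (c : ℂ), ∀ x ∈ J, c • x ∈ J) ∧
    (∀ j ∈ J, ∀ a ∈ A, j * a ∈ J ∧ a * j ∈ J)

def IsMatrixUnits {ι R : Type*} [DecidableEq ι] [Mul R] [Zero R] (e : ι → ι → R) : Prop :=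
  ∀ i j k l, e i j * e k l = if j = k then e i l else 0

def matrixUnitSpan (𝕜 : Type*) {ι R : Type*} [Semiring 𝕜] [AddCommMonoid R] [Module 𝕜 R]
    (e : ι → ι → R) : Submodule 𝕜 R :=
  Submodule.span 𝕜 (Set.range fun p : ι × ι => e p.1 p.2)

theorem matrixUnit_mem_matrixUnitSpan {𝕜 ι R : Type*} [Semiring 𝕜] [AddCommMonoid R]
    [Module 𝕜 R] (e : ι → ι → R) (i j : ι) : e i j ∈ matrixUnitSpan 𝕜 e :=
  Submodule.subset_span ⟨(i, j), rfl⟩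

namespace IsMatrixUnits

theorem mul_self_diag {ι R : Type*} [DecidableEq ι] [Mul R] [Zero R] {e : ι → ι → R}
    (he : IsMatrixUnits e) (k : ι) : e k k * e k k = e k k := by
  rw [he, if_pos rfl]

section Algebra

variable {𝕜 R ι : Type*} [CommSemiring 𝕜] [Semiring R] [Algebra 𝕜 R] [DecidableEq ι]
  {e : ι → ι → R}

theorem mul_mem_matrixUnitSpan (he : IsMatrixUnits e) {x y : R}
    (hx : x ∈ matrixUnitSpan 𝕜 e) (hy : y ∈ matrixUnitSpan 𝕜 e) :
    x * y ∈ matrixUnitSpan 𝕜 e := by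
  suffices h : matrixUnitSpan 𝕜 e * matrixUnitSpan 𝕜 e ≤ matrixUnitSpan 𝕜 e from
    h (Submodule.mul_mem_mul hx hy)
  rw [matrixUnitSpan, Submodule.span_mul_span, Submodule.span_le]
  rintro _ ⟨_, ⟨⟨i, j⟩, rfl⟩, _, ⟨⟨k, l⟩, rfl⟩, rfl⟩
  dsimp only
  rw [he]
  split_ifs
  · exact matrixUnit_mem_matrixUnitSpan e i l
  · exact zero_mem _

theorem diag_mul_mul_diag_mem_span_singleton (he : IsMatrixUnits e) (i j : ι) {a : R}
    (ha : a ∈ matrixUnitSpan 𝕜 e) : e i i * a * e j j ∈ 𝕜 ∙ e i j := by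
  suffices h : matrixUnitSpan 𝕜 e ≤
      (𝕜 ∙ e i j).comap (LinearMap.mulLeftRight 𝕜 (e i i, e j j)) from h ha
  rw [matrixUnitSpan, Submodule.span_le]
  rintro _ ⟨⟨k, l⟩, rfl⟩
  simp only [SetLike.mem_coe, Submodule.mem_comap, LinearMap.mulLeftRight_apply]
  rw [he]
  split_ifs
  · rw [he]
    split_ifs with hlj
    · exact hlj ▸ Submodule.mem_span_singleton_self _
    · exact zero_mem _
  · rw [zero_mul]
    exact zero_mem _

end Algebra

section NormedAlgebra

variable {𝕜 R ι : Type*} [NontriviallyNormedField 𝕜] [NormedRing R] [NormedAlgebra 𝕜 R]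
  [DecidableEq ι] {e : ι → ι → R}

theorem mul_mem_closure_matrixUnitSpan (he : IsMatrixUnits e) {x y : R}
    (hx : x ∈ closure (matrixUnitSpan 𝕜 e : Set R))
    (hy : y ∈ closure (matrixUnitSpan 𝕜 e : Set R)) :
    x * y ∈ closure (matrixUnitSpan 𝕜 e : Set R) :=
  ((matrixUnitSpan 𝕜 e).toNonUnitalSubalgebra
    fun _ _ ↦ he.mul_mem_matrixUnitSpan).topologicalClosure.mul_mem hx hy

theorem exists_diag_mul_mul_diag_eq_smul [CompleteSpace 𝕜] (he : IsMatrixUnits e) (i j : ι)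
    {a : R} (ha : a ∈ closure (matrixUnitSpan 𝕜 e : Set R)) :
    ∃ c : 𝕜, e i i * a * e j j = c • e i j := by
  have hcont : Continuous fun b : R ↦ e i i * b * e j j := by fun_prop
  have hmem := map_mem_closure hcont ha fun _ hb ↦ he.diag_mul_mul_diag_mem_span_singleton i j hb
  rw [(Submodule.closed_of_finiteDimensional (𝕜 ∙ e i j)).closure_eq] at hmem
  obtain ⟨c, hc⟩ := Submodule.mem_span_singleton.mp hmem
  exact ⟨c, hc.symm⟩

theorem diag_corner_eq [CompleteSpace 𝕜] (he : IsMatrixUnits e) (k : ι) :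
    {y | ∃ a ∈ closure (matrixUnitSpan 𝕜 e : Set R), y = e k k * a * e k k} =
      {y | ∃ c : 𝕜, y = c • e k k} := by
  ext y
  constructor
  · rintro ⟨a, ha, rfl⟩
    exact he.exists_diag_mul_mul_diag_eq_smul k k ha
  · rintro ⟨c, rfl⟩
    refine ⟨c • e k k, (matrixUnitSpan 𝕜 e).topologicalClosure.smul_mem c
      (subset_closure (matrixUnit_mem_matrixUnitSpan e k k)), ?_⟩
    rw [mul_smul_comm, he.mul_self_diag, smul_mul_assoc, he.mul_self_diag]

end NormedAlgebra

section ClosedIdeal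

variable {H ι : Type*} [NormedAddCommGroup H] [NormedSpace ℂ H] [DecidableEq ι]
  {e : ι → ι → H →L[ℂ] H} {J : Set (H →L[ℂ] H)}

theorem matrixUnit_mem_of_isClosedIdealOf (he : IsMatrixUnits e)
    (hJ : IsClosedIdealOf (closure (matrixUnitSpan ℂ e : Set (H →L[ℂ] H))) J)
    {x : H →L[ℂ] H} (hxJ : x ∈ J) {i j : ι} (hx : e i i * x * e j j ≠ 0) (k l : ι) :
    e k l ∈ J := by
  obtain ⟨hJA, -, -, -, hJsmul, hJmul⟩ := hJ
  have hmem : ∀ k l, e k l ∈ closure (matrixUnitSpan ℂ e : Set (H →L[ℂ] H)) :=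
    fun k l ↦ subset_closure (matrixUnit_mem_matrixUnitSpan e k l)
  obtain ⟨c, hc⟩ := he.exists_diag_mul_mul_diag_eq_smul i j (hJA hxJ)
  have hc0 : c ≠ 0 := by rintro rfl; exact hx (hc.trans (zero_smul ℂ _))
  have hij : e i j ∈ J := by
    have hcorner : e i i * x * e j j ∈ J :=
      (hJmul _ (hJmul x hxJ _ (hmem i i)).2 _ (hmem j j)).1
    rw [hc] at hcorner
    simpa [smul_smul, hc0] using hJsmul c⁻¹ _ hcorner
  have hkl : e k l = e k i * e i j * e j l := by
    rw [he k i i j, if_pos rfl, he k j j l, if_pos rfl]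
  rw [hkl]
  exact (hJmul _ (hJmul _ hij _ (hmem k i)).2 _ (hmem j l)).1

theorem eq_singleton_zero_or_eq_of_isClosedIdealOf (he : IsMatrixUnits e)
    (hfaithful : ∀ x : H →L[ℂ] H, (∀ i j, e i i * x * e j j = 0) → x = 0)
    (hJ : IsClosedIdealOf (closure (matrixUnitSpan ℂ e : Set (H →L[ℂ] H))) J) :
    J = {0} ∨ J = closure (matrixUnitSpan ℂ e : Set (H →L[ℂ] H)) := by
  obtain ⟨hJA, hJclosed, hJzero, hJadd, hJsmul, -⟩ := id hJ
  refine or_iff_not_imp_left.2 fun hJ0 ↦ ?_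
  obtain ⟨x, hxJ, i, j, hx⟩ : ∃ x ∈ J, ∃ i j, e i i * x * e j j ≠ 0 := by
    by_contra! h
    exact hJ0 (Set.eq_singleton_iff_unique_mem.2 ⟨hJzero, fun x hx ↦ hfaithful x (h x hx)⟩)
  refine hJA.antisymm (closure_minimal ?_ hJclosed)
  intro y hy
  induction hy using Submodule.span_induction with
  | mem _ hu =>
    obtain ⟨⟨k, l⟩, rfl⟩ := hu
    exact he.matrixUnit_mem_of_isClosedIdealOf hJ hxJ hx k l
  | zero => exact hJzero
  | add _ _ _ _ hu hv => exact hJadd _ hu _ hv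
  | smul c _ _ hu => exact hJsmul c _ hu

end ClosedIdeal

end IsMatrixUnits

section CoordinateProjections

variable {𝕜 ι : Type*} {E : ι → Type*} [DecidableEq ι]

theorem lp.eq_zero_of_forall_coordProj_mul_mul_coordProj [NormedField 𝕜]
    [∀ i, NormedAddCommGroup (E i)] [∀ i, NormedSpace 𝕜 (E i)] {P : ι → lp E 2 →L[𝕜] lp E 2}
    (hP : ∀ k η, P k η = lp.single 2 k (η k)) {x : lp E 2 →L[𝕜] lp E 2}
    (hx : ∀ i j, P i * x * P j = 0) : x = 0 := by
  have hcol : ∀ j η, x (P j η) = 0 := fun j η ↦ lp.ext <| funext fun i ↦ by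
    have h := congr(($(hx i j) η) i)
    rwa [mul_apply_eq_comp, mul_apply_eq_comp, hP i, lp.single_apply_self] at h
  refine ContinuousLinearMap.ext fun ξ ↦ ?_
  have hsum : HasSum (fun j ↦ x (P j ξ)) (x ξ) := by
    simp only [hP]
    exact (lp.hasSum_single (p := 2) (by norm_num) ξ).mapL x
  simp only [hcol] at hsum
  exact hsum.unique hasSum_zero

theorem lp.isSelfAdjoint_coordProj [RCLike 𝕜] [∀ i, NormedAddCommGroup (E i)]
    [∀ i, InnerProductSpace 𝕜 (E i)] [∀ i, CompleteSpace (E i)] {P : ι → lp E 2 →L[𝕜] lp E 2}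
    (hP : ∀ k η, P k η = lp.single 2 k (η k)) (k : ι) : IsSelfAdjoint (P k) := by
  rw [ContinuousLinearMap.isSelfAdjoint_iff_isSymmetric]
  intro ξ η
  simp [hP, lp.inner_single_left, lp.inner_single_right]

end CoordinateProjections

section WeightedMatrixUnits

variable {𝕜 ι V : Type*} [NormedField 𝕜] [NormedAddCommGroup V] [NormedSpace 𝕜 V]
  [DecidableEq ι] {T Tinv : ι → V →L[𝕜] V}
  {Tij : ι → ι → lp (fun _ : ι ↦ V) 2 →L[𝕜] lp (fun _ : ι ↦ V) 2}

theorem isMatrixUnits_of_apply (hTinv₁ : ∀ k, T k ∘L Tinv k = 1)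
    (hTij : ∀ i j (ξ : lp (fun _ : ι ↦ V) 2) (n : ι),
      (Tij i j ξ) n = if n = i then Tinv i (T j (ξ j)) else 0) :
    IsMatrixUnits Tij := by
  intro i j k l
  refine ContinuousLinearMap.ext fun ξ ↦ lp.ext <| funext fun n ↦ ?_
  have hT : ∀ z, T j (Tinv j z) = z := fun z ↦ congr($(hTinv₁ j) z)
  by_cases hjk : j = k
  · subst hjk
    simp [mul_apply_eq_comp, hTij, hT]
  · simp [mul_apply_eq_comp, hTij, hjk]

theorem diag_apply_eq_single (hTinv₂ : ∀ k, Tinv k ∘L T k = 1)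
    (hTij : ∀ i j (ξ : lp (fun _ : ι ↦ V) 2) (n : ι),
      (Tij i j ξ) n = if n = i then Tinv i (T j (ξ j)) else 0)
    (k : ι) (η : lp (fun _ : ι ↦ V) 2) : Tij k k η = lp.single 2 k (η k) := by
  refine lp.ext <| funext fun n ↦ ?_
  rw [hTij, lp.single_apply, Pi.single_apply, ← ContinuousLinearMap.comp_apply, hTinv₂,
    one_apply_eq_self]

end WeightedMatrixUnits

theorem one_matricial_algebra_topologically_simple_general
    (T Tinv : ℕ → K →L[ℂ] K)
    (hTinv₁ : ∀ k, T k ∘L Tinv k = 1) (hTinv₂ : ∀ k, Tinv k ∘L T k = 1)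
    (Tij : ℕ → ℕ → (lp (fun _ : ℕ => K) 2 →L[ℂ] lp (fun _ : ℕ => K) 2))
    (hTij : ∀ i j (ξ : lp (fun _ : ℕ => K) 2) (n : ℕ),
      (Tij i j ξ) n = if n = i then Tinv i (T j (ξ j)) else 0)
    (A : Set (lp (fun _ : ℕ => K) 2 →L[ℂ] lp (fun _ : ℕ => K) 2))
    (hA : A = closure
      (↑(Submodule.span ℂ (Set.range fun p : ℕ × ℕ => Tij p.1 p.2)) :
        Set (lp (fun _ : ℕ => K) 2 →L[ℂ] lp (fun _ : ℕ => K) 2))) :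
    -- `A` is a norm-closed subalgebra of `B(H)`
    (IsClosed A ∧ (0 : lp (fun _ : ℕ => K) 2 →L[ℂ] lp (fun _ : ℕ => K) 2) ∈ A ∧
      (∀ x ∈ A, ∀ y ∈ A, x + y ∈ A) ∧ (∀ (c : ℂ), ∀ x ∈ A, c • x ∈ A) ∧
      (∀ x ∈ A, ∀ y ∈ A, x * y ∈ A)) ∧
    -- `A` is topologically simple
    (∀ J : Set (lp (fun _ : ℕ => K) 2 →L[ℂ] lp (fun _ : ℕ => K) 2),
      IsClosedIdealOf A J → J = {0} ∨ J = A) ∧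
    -- each `q_k = T_{kk}` is an algebraically minimal projection of `A`
    (∀ k : ℕ, Tij k k ∈ A ∧ IsSelfAdjoint (Tij k k) ∧ Tij k k * Tij k k = Tij k k ∧
      {y | ∃ a ∈ A, y = Tij k k * a * Tij k k} = {y | ∃ c : ℂ, y = c • Tij k k}) := by
  change A = closure (matrixUnitSpan ℂ Tij : Set _) at hA
  subst hA
  have he : IsMatrixUnits Tij := isMatrixUnits_of_apply hTinv₁ hTij
  have hdiag := diag_apply_eq_single hTinv₂ hTij
  refine ⟨⟨isClosed_closure, subset_closure (zero_mem _),
      fun x hx y hy ↦ (matrixUnitSpan ℂ Tij).topologicalClosure.add_mem hx hy,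
      fun c x hx ↦ (matrixUnitSpan ℂ Tij).topologicalClosure.smul_mem c hx,
      fun x hx y hy ↦ he.mul_mem_closure_matrixUnitSpan hx hy⟩,
    fun J hJ ↦ he.eq_singleton_zero_or_eq_of_isClosedIdealOf
      (fun x ↦ lp.eq_zero_of_forall_coordProj_mul_mul_coordProj hdiag) hJ,
    fun k ↦ ⟨subset_closure (matrixUnit_mem_matrixUnitSpan Tij k k),
      lp.isSelfAdjoint_coordProj hdiag k, he.mul_self_diag k, he.diag_corner_eq k⟩⟩

/-- The 1-matricial algebra determined by a sequence of invertible operators `T_k` on `K`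
with `T_0 = 1`, i.e. the norm-closed span of the matrix units
`T_{ij} = E_{ij} ⊗ T_i⁻¹ T_j` on `H = ℓ²(ℕ, K)`, is a norm-closed topologically simple
subalgebra of `B(H)` in which each `q_k = T_{kk}` is an algebraically minimal projection. -/
theorem one_matricial_algebra_topologically_simple
    (T Tinv : ℕ → K →L[ℂ] K)
    (hT0 : T 0 = 1)
    (hTinv₁ : ∀ k, T k ∘L Tinv k = 1) (hTinv₂ : ∀ k, Tinv k ∘L T k = 1)
    (Tij : ℕ → ℕ → (lp (fun _ : ℕ => K) 2 →L[ℂ] lp (fun _ : ℕ => K) 2))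
    (hTij : ∀ i j (ξ : lp (fun _ : ℕ => K) 2) (n : ℕ),
      (Tij i j ξ) n = if n = i then Tinv i (T j (ξ j)) else 0)
    (A : Set (lp (fun _ : ℕ => K) 2 →L[ℂ] lp (fun _ : ℕ => K) 2))
    (hA : A = closure
      (↑(Submodule.span ℂ (Set.range fun p : ℕ × ℕ => Tij p.1 p.2)) :
        Set (lp (fun _ : ℕ => K) 2 →L[ℂ] lp (fun _ : ℕ => K) 2))) :
    -- `A` is a norm-closed subalgebra of `B(H)`
    (IsClosed A ∧ (0 : lp (fun _ : ℕ => K) 2 →L[ℂ] lp (fun _ : ℕ => K) 2) ∈ A ∧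
      (∀ x ∈ A, ∀ y ∈ A, x + y ∈ A) ∧ (∀ (c : ℂ), ∀ x ∈ A, c • x ∈ A) ∧
      (∀ x ∈ A, ∀ y ∈ A, x * y ∈ A)) ∧
    -- `A` is topologically simple
    (∀ J : Set (lp (fun _ : ℕ => K) 2 →L[ℂ] lp (fun _ : ℕ => K) 2),
      IsClosedIdealOf A J → J = {0} ∨ J = A) ∧
    -- each `q_k = T_{kk}` is an algebraically minimal projection of `A`
    (∀ k : ℕ, Tij k k ∈ A ∧ IsSelfAdjoint (Tij k k) ∧ Tij k k * Tij k k = Tij k k ∧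
      {y | ∃ a ∈ A, y = Tij k k * a * Tij k k} = {y | ∃ c : ℂ, y = c • Tij k k}) :=
  one_matricial_algebra_topologically_simple_general T Tinv hTinv₁ hTinv₂ Tij hTij A hA
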